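/- Let R be an irreducible simply-laced root system with highest root α_0 and simple root β_0 defining a maximal parabolic P. Write l(α) for the height of a root α (sum of coefficients in the simple-root expansion) and ρ_P for half the sum of roots in R^+ \ R_L^+. In the S-type case (V abelian, β̃ = α_0): l(β̃) = 2⟨ρ_P, β_0^∨⟩ - 1. -/

import Mathlib

/-!
Write `s_i` for the reflection in the simple root `α_i`. It permutes `R⁺ ∖ {α_i}` and negates
`⟨·, α_i^∨⟩`, so `⟨2ρ, α_i^∨⟩ = 2` and therefore `⟨2ρ, α₀^∨⟩ = 2 l(α₀)`. For `i ≠ β₀` it also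
preserves `R⁺ ∖ R_L⁺` (it only changes the `α_i`-coordinate), so `⟨2ρ_P, α_i^∨⟩ = 0`, and as the
`β₀`-coordinate of `α₀` is `1`, `⟨2ρ_P, α₀^∨⟩ = ⟨2ρ_P, β₀^∨⟩`. Finally `α₀` is dominant, so
`⟨β, α₀^∨⟩ ∈ {0, 1}` for every positive root `β ≠ α₀`, and `β ↦ α₀ - β` pairs off those with value
`1`, exchanging `R_L⁺` with its complement. Hence `⟨2ρ_P, α₀^∨⟩ - ⟨2ρ_L, α₀^∨⟩ = ⟨α₀, α₀^∨⟩ = 2`,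
and `l(α₀) = ½ ⟨2ρ_P + 2ρ_L, α₀^∨⟩ = ⟨2ρ_P, α₀^∨⟩ - 1`.
-/

open RealInnerProductSpace

theorem Finset.sum_eq_zero_of_involution_of_map_neg {α R : Type*} [NonAssocRing R]
    [NoZeroDivisors R] [CharZero R] {s : Finset α} {f : α → R} (σ : α → α)
    (hmem : ∀ x ∈ s, σ x ∈ s) (hσ : ∀ x ∈ s, σ (σ x) = x) (hf : ∀ x ∈ s, f (σ x) = -f x) :
    ∑ x ∈ s, f x = 0 :=
  Finset.sum_involution (fun x _ => σ x) (fun x hx => by rw [hf x hx, add_neg_cancel])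
    (fun x hx hfx hfix => hfx <| CharZero.eq_neg_self_iff.mp (by simpa only [hfix] using hf x hx))
    hmem hσ

section

variable {V : Type*} [NormedAddCommGroup V] [InnerProductSpace ℝ V]

def rootReflection (α β : V) : V := β - ⟪β, α⟫ • α

theorem inner_rootReflection_self {α : V} (hα : ⟪α, α⟫ = 2) (β : V) :
    ⟪rootReflection α β, α⟫ = -⟪β, α⟫ := by
  rw [rootReflection, inner_sub_left, real_inner_smul_left, hα]
  ring

theorem rootReflection_rootReflection {α : V} (hα : ⟪α, α⟫ = 2) (β : V) :
    rootReflection α (rootReflection α β) = β := by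
  rw [rootReflection, inner_rootReflection_self hα, rootReflection]
  module

theorem rootReflection_self {α : V} (hα : ⟪α, α⟫ = 2) : rootReflection α α = -α := by
  rw [rootReflection, hα]
  module

theorem sum_inner_eq_zero_of_rootReflection_mem {α : V} (hα : ⟪α, α⟫ = 2) {T : Finset V}
    (hT : ∀ β ∈ T, rootReflection α β ∈ T) : ∑ β ∈ T, ⟪β, α⟫ = 0 :=
  Finset.sum_eq_zero_of_involution_of_map_neg _ hT (fun β _ => rootReflection_rootReflection hα β)
    fun β _ => inner_rootReflection_self hα β

theorem sum_inner_sum_smul {ι : Type*} [Fintype ι] (T : Finset V) (c : ι → ℝ) (a : ι → V) :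
    ∑ β ∈ T, ⟪β, ∑ i, c i • a i⟫ = ∑ i, c i * ∑ β ∈ T, ⟪β, a i⟫ := by
  simp only [inner_sum, real_inner_smul_right, Finset.mul_sum]
  exact Finset.sum_comm

theorem real_inner_lt_two_of_ne {β γ : V} (hβ : ⟪β, β⟫ = 2) (hγ : ⟪γ, γ⟫ = 2) (hne : β ≠ γ) :
    ⟪β, γ⟫ < 2 := by
  have hpos : 0 < ⟪β - γ, β - γ⟫ := real_inner_self_pos.mpr (sub_ne_zero.mpr hne)
  rw [inner_sub_left, inner_sub_right, inner_sub_right, hβ, hγ, real_inner_comm β γ] at hpos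
  linarith

/-- `R` plays the role of `R⁺`, `a` of the simple roots and `N α` of the simple-root coordinates
of `α`. All roots have `⟪α, α⟫ = 2`, so `⟪β, α⟫ = ⟨β, α^∨⟩` and `rootReflection α` is `s_α`. -/
structure IsSimplyLacedPositiveSystem {ι : Type*} [Fintype ι] (a : ι → V) (R : Finset V)
    (N : V → ι → ℕ) : Prop where
  linearIndependent : LinearIndependent ℝ a
  eq_sum_coeff : ∀ α ∈ R, α = ∑ i, (N α i : ℝ) • a i
  simple_mem : ∀ i, a i ∈ R
  inner_self : ∀ α ∈ R, ⟪α, α⟫ = 2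
  rootReflection_mem_or_neg_mem :
    ∀ α ∈ R, ∀ β ∈ R, rootReflection α β ∈ R ∨ -rootReflection α β ∈ R

namespace IsSimplyLacedPositiveSystem

variable {ι : Type*} [Fintype ι] {a : ι → V} {R : Finset V} {N : V → ι → ℕ} {α β γ δ α₀ : V}

theorem coeff_eq (h : IsSimplyLacedPositiveSystem a R N) (hγ : γ ∈ R) {f : ι → ℝ}
    (hf : γ = ∑ i, f i • a i) (i : ι) : (N γ i : ℝ) = f i :=
  Fintype.linearIndependent_iffₛ.mp h.linearIndependent _ _ (h.eq_sum_coeff γ hγ ▸ hf) i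

theorem coeff_of_eq_smul_add_smul (h : IsSimplyLacedPositiveSystem a R N) (hβ : β ∈ R)
    (hγ : γ ∈ R) (hδ : δ ∈ R) {x y : ℝ} (he : δ = x • β + y • γ) (i : ι) :
    (N δ i : ℝ) = x * N β i + y * N γ i := by
  refine h.coeff_eq hδ (f := fun i => x * N β i + y * N γ i) ?_ i
  rw [he]
  conv_lhs => rw [h.eq_sum_coeff β hβ, h.eq_sum_coeff γ hγ]
  simp only [Finset.smul_sum, smul_smul, ← Finset.sum_add_distrib, add_smul]

theorem coeff_simple_self (h : IsSimplyLacedPositiveSystem a R N) (i : ι) : N (a i) i = 1 := by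
  classical
  exact_mod_cast (h.coeff_eq (h.simple_mem i) (f := Pi.single i 1)
    (by simp [Pi.single_apply, ite_smul]) i).trans (Pi.single_eq_same i 1)

theorem coeff_simple_of_ne (h : IsSimplyLacedPositiveSystem a R N) {i j : ι} (hji : j ≠ i) :
    N (a i) j = 0 := by
  classical
  exact_mod_cast (h.coeff_eq (h.simple_mem i) (f := Pi.single i 1)
    (by simp [Pi.single_apply, ite_smul]) j).trans (Pi.single_eq_of_ne hji 1)

theorem ne_zero (h : IsSimplyLacedPositiveSystem a R N) (hα : α ∈ R) : α ≠ 0 := by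
  rintro rfl
  simpa using h.inner_self 0 hα

theorem eq_of_coeff_eq (h : IsSimplyLacedPositiveSystem a R N) (hβ : β ∈ R) (hγ : γ ∈ R)
    (hc : ∀ i, N β i = N γ i) : β = γ := by
  rw [h.eq_sum_coeff β hβ, h.eq_sum_coeff γ hγ]
  simp only [hc]

theorem neg_notMem (h : IsSimplyLacedPositiveSystem a R N) (hα : α ∈ R) : -α ∉ R := by
  intro hneg
  apply h.ne_zero hα
  rw [h.eq_sum_coeff α hα]
  refine Finset.sum_eq_zero fun i _ => ?_
  have hc := h.coeff_of_eq_smul_add_smul hα hα hneg (x := -1) (y := 0) (by simp) i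
  have : (N α i : ℝ) = 0 := by
    linarith [(N α i).cast_nonneg (α := ℝ), (N (-α) i).cast_nonneg (α := ℝ)]
  rw [this, zero_smul]

theorem coeff_sub_add (h : IsSimplyLacedPositiveSystem a R N) (hα : α ∈ R) (hβ : β ∈ R)
    (hmem : α - β ∈ R) (i : ι) : N (α - β) i + N β i = N α i := by
  have := h.coeff_of_eq_smul_add_smul hα hβ hmem (x := 1) (y := -1) (by module) i
  exact_mod_cast (by linarith : (N (α - β) i : ℝ) + N β i = N α i)

theorem eq_simple_of_coeff_eq_zero (h : IsSimplyLacedPositiveSystem a R N) (hβ : β ∈ R) {i : ι}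
    (hc : ∀ j ≠ i, N β j = 0) : β = a i := by
  have hβi : β = (N β i : ℝ) • a i := by
    conv_lhs => rw [h.eq_sum_coeff β hβ]
    exact Finset.sum_eq_single_of_mem i (Finset.mem_univ i) fun j _ hj => by simp [hc j hj]
  have hsq : (N β i : ℝ) * N β i * 2 = 2 := by
    have := h.inner_self β hβ
    rwa [hβi, real_inner_smul_left, real_inner_smul_right, h.inner_self _ (h.simple_mem i),
      ← mul_assoc] at this
  have hone : N β i = 1 := by
    have : (N β i : ℝ) = 1 := by nlinarith [(N β i).cast_nonneg (α := ℝ)]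
    exact_mod_cast this
  rw [hβi, hone, Nat.cast_one, one_smul]

theorem coeff_rootReflection_simple (h : IsSimplyLacedPositiveSystem a R N) {i : ι} (hβ : β ∈ R)
    (hmem : rootReflection (a i) β ∈ R) (j : ι) :
    (N (rootReflection (a i) β) j : ℝ) = N β j - ⟪β, a i⟫ * N (a i) j := by
  rw [h.coeff_of_eq_smul_add_smul hβ (h.simple_mem i) hmem (x := 1) (y := -⟪β, a i⟫)
    (by rw [rootReflection]; module) j]
  ring

theorem rootReflection_simple_mem (h : IsSimplyLacedPositiveSystem a R N) {i : ι} (hβ : β ∈ R)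
    (hne : β ≠ a i) : rootReflection (a i) β ∈ R := by
  refine (h.rootReflection_mem_or_neg_mem _ (h.simple_mem i) β hβ).resolve_right
    fun hneg => hne ?_
  -- off `i`, the coefficients of `-s_i β` are those of `-β`, so both vanish
  refine h.eq_simple_of_coeff_eq_zero hβ fun j hj => ?_
  have hc := h.coeff_of_eq_smul_add_smul hβ (h.simple_mem i) hneg (x := -1) (y := ⟪β, a i⟫)
    (by rw [rootReflection]; module) j
  rw [h.coeff_simple_of_ne hj, Nat.cast_zero, mul_zero, add_zero] at hc
  have : (N β j : ℝ) ≤ 0 := by linarith [(N (-rootReflection (a i) β) j).cast_nonneg (α := ℝ)]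
  exact_mod_cast le_antisymm this (N β j).cast_nonneg

theorem sum_inner_simple_eq_two (h : IsSimplyLacedPositiveSystem a R N) (i : ι) :
    ∑ β ∈ R, ⟪β, a i⟫ = 2 := by
  classical
  have hai := h.simple_mem i
  have hα := h.inner_self _ hai
  have hstable : ∀ β ∈ R.erase (a i), rootReflection (a i) β ∈ R.erase (a i) := by
    intro β hβ
    obtain ⟨hne, hβR⟩ := Finset.mem_erase.mp hβ
    refine Finset.mem_erase.mpr
      ⟨fun heq => h.neg_notMem hai ?_, h.rootReflection_simple_mem hβR hne⟩
    rwa [← rootReflection_rootReflection hα β, heq, rootReflection_self hα] at hβR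
  rw [← Finset.sum_erase_add R _ hai, sum_inner_eq_zero_of_rootReflection_mem hα hstable, hα,
    zero_add]

theorem sum_inner_eq_two_mul_height (h : IsSimplyLacedPositiveSystem a R N) (hα : α ∈ R) :
    ∑ β ∈ R, ⟪β, α⟫ = 2 * ∑ i, (N α i : ℝ) := by
  conv_lhs => rw [h.eq_sum_coeff α hα]
  simp only [sum_inner_sum_smul, h.sum_inner_simple_eq_two, Finset.mul_sum, mul_comm]

theorem sum_filter_coeff_ne_zero_inner_simple (h : IsSimplyLacedPositiveSystem a R N) {i k : ι}
    (hik : i ≠ k) : ∑ β ∈ R with N β k ≠ 0, ⟪β, a i⟫ = 0 := by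
  refine sum_inner_eq_zero_of_rootReflection_mem (h.inner_self _ (h.simple_mem i)) fun β hβ => ?_
  obtain ⟨hβR, hβk⟩ := Finset.mem_filter.mp hβ
  have hne : β ≠ a i := by
    rintro rfl
    exact hβk (h.coeff_simple_of_ne hik.symm)
  have hmem := h.rootReflection_simple_mem hβR hne
  have hc := h.coeff_rootReflection_simple hβR hmem k
  rw [h.coeff_simple_of_ne hik.symm, Nat.cast_zero, mul_zero, sub_zero, Nat.cast_inj] at hc
  exact Finset.mem_filter.mpr ⟨hmem, hc ▸ hβk⟩

theorem sum_filter_coeff_ne_zero_inner (h : IsSimplyLacedPositiveSystem a R N) (hα : α ∈ R)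
    (k : ι) : ∑ β ∈ R with N β k ≠ 0, ⟪β, α⟫ = N α k * ∑ β ∈ R with N β k ≠ 0, ⟪β, a k⟫ := by
  conv_lhs => rw [h.eq_sum_coeff α hα]
  rw [sum_inner_sum_smul, Finset.sum_eq_single k (fun i _ hik => by
    rw [h.sum_filter_coeff_ne_zero_inner_simple hik, mul_zero]) (by simp)]

theorem exists_nat_inner_highest_simple (h : IsSimplyLacedPositiveSystem a R N) (hα₀ : α₀ ∈ R)
    (hhigh : ∀ α ∈ R, ∀ i, N α i ≤ N α₀ i) (i : ι) : ∃ n : ℕ, ⟪α₀, a i⟫ = n := by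
  by_cases he : α₀ = a i
  · exact ⟨2, by rw [he, h.inner_self _ (h.simple_mem i), Nat.cast_ofNat]⟩
  · have hmem := h.rootReflection_simple_mem hα₀ he
    have hc := h.coeff_rootReflection_simple hα₀ hmem i
    rw [h.coeff_simple_self, Nat.cast_one, mul_one] at hc
    exact ⟨N α₀ i - N (rootReflection (a i) α₀) i, by
      rw [Nat.cast_sub (hhigh _ hmem i)]; linarith⟩

theorem exists_nat_inner_highest (h : IsSimplyLacedPositiveSystem a R N) (hα₀ : α₀ ∈ R)
    (hhigh : ∀ α ∈ R, ∀ i, N α i ≤ N α₀ i) (hβ : β ∈ R) : ∃ n : ℕ, ⟪β, α₀⟫ = n := by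
  choose m hm using h.exists_nat_inner_highest_simple hα₀ hhigh
  refine ⟨∑ i, N β i * m i, ?_⟩
  conv_lhs => rw [h.eq_sum_coeff β hβ]
  push_cast
  rw [sum_inner]
  refine Finset.sum_congr rfl fun i _ => ?_
  rw [real_inner_smul_left, real_inner_comm, hm]

theorem inner_highest_eq_zero_or_one (h : IsSimplyLacedPositiveSystem a R N) (hα₀ : α₀ ∈ R)
    (hhigh : ∀ α ∈ R, ∀ i, N α i ≤ N α₀ i) (hβ : β ∈ R) (hne : β ≠ α₀) :
    ⟪β, α₀⟫ = 0 ∨ ⟪β, α₀⟫ = 1 := by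
  obtain ⟨n, hn⟩ := h.exists_nat_inner_highest hα₀ hhigh hβ
  have hlt := real_inner_lt_two_of_ne (h.inner_self β hβ) (h.inner_self α₀ hα₀) hne
  rw [hn] at hlt ⊢
  have : n < 2 := by exact_mod_cast hlt
  interval_cases n <;> simp

theorem highest_sub_mem_of_inner_eq_one (h : IsSimplyLacedPositiveSystem a R N) (hα₀ : α₀ ∈ R)
    (hhigh : ∀ α ∈ R, ∀ i, N α i ≤ N α₀ i) (hβ : β ∈ R) (h1 : ⟪β, α₀⟫ = 1) : α₀ - β ∈ R := by
  have hrefl : rootReflection β α₀ = α₀ - β := by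
    rw [rootReflection, real_inner_comm, h1, one_smul]
  refine hrefl ▸ (h.rootReflection_mem_or_neg_mem β hβ α₀ hα₀).resolve_right fun hneg => ?_
  -- `β - α₀` would be a positive root with coefficients `N β - N α₀ ≤ 0`
  have hβα₀ : β = α₀ := h.eq_of_coeff_eq hβ hα₀ fun i => by
    have hc := h.coeff_of_eq_smul_add_smul hβ hα₀ (hrefl ▸ hneg) (x := 1) (y := -1)
      (by module) i
    have : (N α₀ i : ℝ) ≤ N β i := by linarith [(N (-(α₀ - β)) i).cast_nonneg (α := ℝ)]
    exact le_antisymm (hhigh β hβ i) (by exact_mod_cast this)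
  rw [hβα₀, h.inner_self α₀ hα₀] at h1
  norm_num at h1

theorem sum_signed_inner_highest_filter_eq_one (h : IsSimplyLacedPositiveSystem a R N)
    (hα₀ : α₀ ∈ R) (hhigh : ∀ α ∈ R, ∀ i, N α i ≤ N α₀ i) {k : ι} (hk : N α₀ k = 1) :
    ∑ β ∈ R with ⟪β, α₀⟫ = 1, (if N β k ≠ 0 then ⟪β, α₀⟫ else -⟪β, α₀⟫) = 0 := by
  have hpair : ∀ β ∈ {β ∈ R | ⟪β, α₀⟫ = 1}, α₀ - β ∈ R ∧ ⟪α₀ - β, α₀⟫ = 1 := fun β hβ => by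
    obtain ⟨hβR, h1⟩ := Finset.mem_filter.mp hβ
    refine ⟨h.highest_sub_mem_of_inner_eq_one hα₀ hhigh hβR h1, ?_⟩
    rw [inner_sub_left, h.inner_self α₀ hα₀, h1]
    norm_num
  -- `β ↦ α₀ - β` is an involution here, and exactly one of `β`, `α₀ - β` has `k`-coefficient `1`
  refine Finset.sum_eq_zero_of_involution_of_map_neg (α₀ - ·)
    (fun β hβ => Finset.mem_filter.mpr (hpair β hβ)) (fun β _ => sub_sub_cancel α₀ β)
    fun β hβ => ?_
  have hc := h.coeff_sub_add hα₀ (Finset.mem_filter.mp hβ).1 (hpair β hβ).1 k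
  rw [(hpair β hβ).2, (Finset.mem_filter.mp hβ).2]
  split_ifs <;> first | (exfalso; omega) | norm_num

theorem sum_signed_inner_highest (h : IsSimplyLacedPositiveSystem a R N) (hα₀ : α₀ ∈ R)
    (hhigh : ∀ α ∈ R, ∀ i, N α i ≤ N α₀ i) {k : ι} (hk : N α₀ k = 1) :
    ∑ β ∈ R, (if N β k ≠ 0 then ⟪β, α₀⟫ else -⟪β, α₀⟫) = 2 := by
  rw [← Finset.sum_filter_add_sum_filter_not R (⟪·, α₀⟫ = 1),
    h.sum_signed_inner_highest_filter_eq_one hα₀ hhigh hk, zero_add]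
  have hα₀mem : α₀ ∈ {β ∈ R | ¬⟪β, α₀⟫ = 1} :=
    Finset.mem_filter.mpr ⟨hα₀, by rw [h.inner_self α₀ hα₀]; norm_num⟩
  rw [Finset.sum_eq_single_of_mem α₀ hα₀mem fun β hβ hne => ?_]
  · rw [if_pos (hk ▸ one_ne_zero), h.inner_self α₀ hα₀]
  obtain ⟨hβR, h1⟩ := Finset.mem_filter.mp hβ
  simp [(h.inner_highest_eq_zero_or_one hα₀ hhigh hβR hne).resolve_right h1]

end IsSimplyLacedPositiveSystem

end

/-- `N α b0 ≠ 0` cuts out `R⁺ ∖ R_L⁺`, so the sum on the right is `⟨2ρ_P, β₀^∨⟩`. -/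
theorem stmt_7 (V : Type*) [NormedAddCommGroup V] [InnerProductSpace ℝ V]
    (ι : Type*) [Fintype ι] (a : ι → V) (Rpos : Finset V) (b0 : ι)
    (hli : LinearIndependent ℝ a)
    (N : V → ι → ℕ)
    (hcoef : ∀ α ∈ Rpos, α = ∑ i, (N α i : ℝ) • a i)
    (hsimple : ∀ i, a i ∈ Rpos)
    (hnorm : ∀ α ∈ Rpos, ⟪α, α⟫ = 2)
    (hrefl : ∀ α ∈ Rpos, ∀ β ∈ Rpos,
      β - ⟪β, α⟫ • α ∈ Rpos ∨ -(β - ⟪β, α⟫ • α) ∈ Rpos)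
    (α0 : V) (hα0 : α0 ∈ Rpos)
    (hhigh : ∀ α ∈ Rpos, ∀ i, N α i ≤ N α0 i)
    (hS : N α0 b0 = 1) :
    (∑ i, (N α0 i : ℝ))
      = (∑ α ∈ Rpos, if N α b0 ≠ 0 then ⟪α, a b0⟫ else 0) - 1 := by
  have h : IsSimplyLacedPositiveSystem a Rpos N := ⟨hli, hcoef, hsimple, hnorm, hrefl⟩
  have hsign := h.sum_signed_inner_highest hα0 hhigh hS
  have hρP := h.sum_filter_coeff_ne_zero_inner hα0 b0
  rw [hS, Nat.cast_one, one_mul] at hρP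
  rw [Finset.sum_ite, Finset.sum_neg_distrib] at hsign
  rw [← Finset.sum_filter, ← hρP]
  linarith [h.sum_inner_eq_two_mul_height hα0,
    Finset.sum_filter_add_sum_filter_not Rpos (N · b0 ≠ 0) (⟪·, α0⟫)]
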